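/- Let κ be an ordinal and let S = (X_α, r^β_α)_{α≤β<κ} be a continuous inverse sequence of compact Hausdorff spaces (r^α_α = id, r^β_α ∘ r^γ_β = r^γ_α for α ≤ β ≤ γ, and for every limit ordinal δ < κ the diagonal map x ↦ (r^δ_ξ(x))_{ξ<δ} is a homeomorphism of X_δ onto the inverse limit of the sequence below δ) such that every bonding map r^{α+1}_α : X_{α+1} → X_α is a retraction, i.e. admits a continuous right inverse. Then S has a right inverse: there exist continuous maps i^β_α : X_α → X_β for α ≤ β < κ with r^β_α ∘ i^β_α = id_{X_α}, i^α_α = id_{X_α}, and i^γ_β ∘ i^β_α = i^γ_α whenever α ≤ β ≤ γ < κ. -/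

import Mathlib

universe u

namespace ContRetrAux

variable (κ : Ordinal.{0}) (X : ∀ α : Ordinal.{0}, α < κ → Type u)

def cst {α β : Ordinal.{0}} (h : α = β) {hα : α < κ} {hβ : β < κ} (x : X α hα) : X β hβ := by
  subst h; exact x

theorem cst_refl {α : Ordinal.{0}} (h : α = α) {hα hβ : α < κ} (x : X α hα) :
    cst κ X h x = x := rfl

theorem cst_cont [inst : ∀ α h, TopologicalSpace (X α h)] {α β : Ordinal.{0}} (h : α = β)
    {hα : α < κ} {hβ : β < κ} : Continuous (cst κ X h : X α hα → X β hβ) := by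
  subst h; exact continuous_id

variable (r : ∀ (α β : Ordinal.{0}) (hαβ : α ≤ β) (hβ : β < κ),
      X β hβ → X α (lt_of_le_of_lt hαβ hβ))

theorem r_cst {β β' : Ordinal.{0}} (h : β = β') {hβ : β < κ} {hβ' : β' < κ} {ξ : Ordinal.{0}}
    (hle : ξ ≤ β) (hle' : ξ ≤ β') (x : X β hβ) :
    r ξ β' hle' hβ' (cst κ X h x) = r ξ β hle hβ x := by
  subst h; rfl

variable
  (g : ∀ (α : Ordinal.{0}) (hs : α + 1 < κ),
      X α (lt_of_le_of_lt ((le_self_add : α ≤ α + 1)) hs) → X (α + 1) hs)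
  (E : ∀ (δ : Ordinal.{0}) (hδ : δ < κ), Order.IsSuccLimit δ →
    {t : ∀ ξ : {o : Ordinal.{0} // o < δ}, X ξ.1 (ξ.2.trans hδ) //
       ∀ (ξ η : {o : Ordinal.{0} // o < δ}) (hle : ξ.1 ≤ η.1),
         r ξ.1 η.1 hle (η.2.trans hδ) (t η) = t ξ} → X δ hδ)
  (junk : ∀ (α β : Ordinal.{0}) (hαβ : α ≤ β) (hβ : β < κ),
      X α (lt_of_le_of_lt hαβ hβ) → X β hβ)

open scoped Classical in
noncomputable def val : ∀ (β : Ordinal.{0}) (hβ : β < κ) (α : Ordinal.{0}) (hαβ : α ≤ β),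
    X α (lt_of_le_of_lt hαβ hβ) → X β hβ :=
  fun β => Ordinal.limitRecOn
    (motive := fun β => ∀ (hβ : β < κ) (α : Ordinal.{0}) (hαβ : α ≤ β),
      X α (lt_of_le_of_lt hαβ hβ) → X β hβ) β
    (fun _hβ α hα x => cst κ X (nonpos_iff_eq_zero.mp hα) x)
    (fun γ ih hβ α hα x =>
      if h : α ≤ γ then
        cst κ X (Ordinal.add_one_eq_succ γ)
          (g γ (by rw [Ordinal.add_one_eq_succ]; exact hβ)
            (ih ((Order.lt_succ γ).trans hβ) α h x))
      else cst κ X ((Order.le_succ_iff_eq_or_le.mp hα).resolve_right h) x)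
    (fun δ _hlim ih hδ α hαδ x =>
      if hα : α = δ then cst κ X hα x
      else
        let t : ∀ ξ : {o : Ordinal.{0} // o < δ}, X ξ.1 (ξ.2.trans hδ) := fun ξ =>
          if h : α ≤ ξ.1 then ih ξ.1 ξ.2 (ξ.2.trans hδ) α h x
          else r ξ.1 α (le_of_not_ge h) (lt_of_le_of_lt hαδ hδ) x
        if hth : ∀ (ξ η : {o : Ordinal.{0} // o < δ}) (hle : ξ.1 ≤ η.1),
            r ξ.1 η.1 hle (η.2.trans hδ) (t η) = t ξ then
          E δ hδ _hlim ⟨t, hth⟩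
        else junk α δ hαδ hδ x)

theorem val_zero (hβ : (0:Ordinal.{0}) < κ) (α : Ordinal.{0}) (hα : α ≤ 0)
    (x : X α (lt_of_le_of_lt hα hβ)) :
    val κ X r g E junk 0 hβ α hα x = cst κ X (nonpos_iff_eq_zero.mp hα) x := by
  simp only [val, Ordinal.limitRecOn_zero]

theorem val_succ (γ : Ordinal.{0}) (hβ : Order.succ γ < κ) (α : Ordinal.{0})
    (hα : α ≤ Order.succ γ) (x : X α (lt_of_le_of_lt hα hβ)) :
    val κ X r g E junk (Order.succ γ) hβ α hα x =
      if h : α ≤ γ then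
        cst κ X (Ordinal.add_one_eq_succ γ)
          (g γ (by rw [Ordinal.add_one_eq_succ]; exact hβ)
            (val κ X r g E junk γ ((Order.lt_succ γ).trans hβ) α h x))
      else cst κ X ((Order.le_succ_iff_eq_or_le.mp hα).resolve_right h) x := by
  simp only [val, Ordinal.limitRecOn_succ]
  rfl

open scoped Classical in
theorem val_limit (δ : Ordinal.{0}) (hlim : Order.IsSuccLimit δ) (hδ : δ < κ) (α : Ordinal.{0})
    (hαδ : α ≤ δ) (x : X α (lt_of_le_of_lt hαδ hδ)) :
    val κ X r g E junk δ hδ α hαδ x =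
      if hα : α = δ then cst κ X hα x
      else
        let t : ∀ ξ : {o : Ordinal.{0} // o < δ}, X ξ.1 (ξ.2.trans hδ) := fun ξ =>
          if h : α ≤ ξ.1 then val κ X r g E junk ξ.1 (ξ.2.trans hδ) α h x
          else r ξ.1 α (le_of_not_ge h) (lt_of_le_of_lt hαδ hδ) x
        if hth : ∀ (ξ η : {o : Ordinal.{0} // o < δ}) (hle : ξ.1 ≤ η.1),
            r ξ.1 η.1 hle (η.2.trans hδ) (t η) = t ξ then
          E δ hδ hlim ⟨t, hth⟩
        else junk α δ hαδ hδ x := by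
  simp only [val, Ordinal.limitRecOn_limit _ _ _ _ hlim]

theorem val_self (β : Ordinal.{0}) (hβ : β < κ) (h : β ≤ β) :
    val κ X r g E junk β hβ β h = id := by
  rcases Ordinal.zero_or_succ_or_isSuccLimit β with rfl | ⟨γ, rfl⟩ | hlim
  · funext x; rw [val_zero, cst_refl]; · rfl
    · exact hβ
  · funext x; rw [val_succ, dif_neg (Order.lt_succ γ).not_ge, cst_refl]; · rfl
    · exact hβ
  · funext x; rw [val_limit κ X r g E junk β hlim hβ, dif_pos rfl, cst_refl]; · rfl
    · exact hβ

theorem val_spec [inst : ∀ α h, TopologicalSpace (X α h)]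
    (hrcont : ∀ α β hαβ hβ, Continuous (r α β hαβ hβ))
    (hrid : ∀ α (hα : α < κ), r α α le_rfl hα = id)
    (hrcomp : ∀ (α β γ : Ordinal.{0}) (hαβ : α ≤ β) (hβγ : β ≤ γ) (hγ : γ < κ),
      r α β hαβ (lt_of_le_of_lt hβγ hγ) ∘ r β γ hβγ hγ = r α γ (hαβ.trans hβγ) hγ)
    (hgcont : ∀ α hs, Continuous (g α hs))
    (hg : ∀ α hs, r α (α+1) ((le_self_add : α ≤ α + 1)) hs ∘ g α hs = id)
    (hEcont : ∀ δ hδ hlim, Continuous (E δ hδ hlim))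
    (hE : ∀ δ hδ hlim s (ξ : {o : Ordinal.{0} // o < δ}),
        r ξ.1 δ ξ.2.le hδ (E δ hδ hlim s) = s.1 ξ)
    (β : Ordinal.{0}) : ∀ (hβ : β < κ),
    (∀ α hαβ, Continuous (val κ X r g E junk β hβ α hαβ)) ∧
    (∀ (ξ α : Ordinal.{0}) (hξα : ξ ≤ α) (hαβ : α ≤ β)
        (x : X α (lt_of_le_of_lt hαβ hβ)),
      r ξ β (hξα.trans hαβ) hβ (val κ X r g E junk β hβ α hαβ x)
        = r ξ α hξα (lt_of_le_of_lt hαβ hβ) x) ∧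
    (∀ (α η : Ordinal.{0}) (hαη : α ≤ η) (hηβ : η ≤ β)
        (x : X α (lt_of_le_of_lt (hαη.trans hηβ) hβ)),
      val κ X r g E junk β hβ η hηβ
          (val κ X r g E junk η (lt_of_le_of_lt hηβ hβ) α hαη x)
        = val κ X r g E junk β hβ α (hαη.trans hηβ) x) := by
  induction β using Ordinal.induction with
  | h β IH =>
  intro hβ
  rcases Ordinal.zero_or_succ_or_isSuccLimit β with rfl | ⟨γ, rfl⟩ | hlim
  · -- zero case
    refine ⟨?_, ?_, ?_⟩
    · intro α hαβ
      obtain rfl : α = 0 := nonpos_iff_eq_zero.mp hαβ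
      have hfun : val κ X r g E junk 0 hβ 0 hαβ = id := val_self κ X r g E junk 0 hβ hαβ
      rw [hfun]; exact continuous_id
    · intro ξ α hξα hαβ x
      obtain rfl : α = 0 := nonpos_iff_eq_zero.mp hαβ
      obtain rfl : ξ = 0 := nonpos_iff_eq_zero.mp hξα
      rw [val_self κ X r g E junk 0 hβ hαβ]; rfl
    · intro α η hαη hηβ x
      obtain rfl : η = 0 := nonpos_iff_eq_zero.mp hηβ
      obtain rfl : α = 0 := nonpos_iff_eq_zero.mp hαη
      rw [val_self κ X r g E junk 0 hβ hηβ]; rfl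
  · -- successor case
    have hγκ : γ < κ := (Order.lt_succ γ).trans hβ
    have hs : γ + 1 < κ := by rw [Ordinal.add_one_eq_succ]; exact hβ
    obtain ⟨IH1, IH2, IH3⟩ := IH γ (Order.lt_succ γ) hγκ
    refine ⟨?_, ?_, ?_⟩
    · intro α hαβ
      by_cases h : α ≤ γ
      · have hfun : val κ X r g E junk (Order.succ γ) hβ α hαβ =
            fun x => cst κ X (Ordinal.add_one_eq_succ γ)
              (g γ hs (val κ X r g E junk γ hγκ α h x)) := by
          funext x; rw [val_succ, dif_pos h]
        rw [hfun]
        exact (cst_cont κ X _).comp ((hgcont γ hs).comp (IH1 α h))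
      · have hα : α = Order.succ γ := (Order.le_succ_iff_eq_or_le.mp hαβ).resolve_right h
        have hfun : val κ X r g E junk (Order.succ γ) hβ α hαβ =
            cst κ X hα := by
          funext x; rw [val_succ, dif_neg h]
        rw [hfun]; exact cst_cont κ X hα
    · intro ξ α hξα hαβ x
      rw [val_succ]
      by_cases h : α ≤ γ
      · rw [dif_pos h]
        calc r ξ (Order.succ γ) (hξα.trans hαβ) hβ
              (cst κ X (Ordinal.add_one_eq_succ γ)
                (g γ hs (val κ X r g E junk γ hγκ α h x)))
            = r ξ (γ + 1) ((hξα.trans h).trans ((le_self_add : γ ≤ γ + 1))) hs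
                (g γ hs (val κ X r g E junk γ hγκ α h x)) := r_cst κ X r _ _ _ _
          _ = r ξ γ (hξα.trans h) hγκ
                (r γ (γ + 1) ((le_self_add : γ ≤ γ + 1)) hs
                  (g γ hs (val κ X r g E junk γ hγκ α h x))) :=
              (congrFun (hrcomp ξ γ (γ + 1) (hξα.trans h) ((le_self_add : γ ≤ γ + 1)) hs) _).symm
          _ = r ξ γ (hξα.trans h) hγκ (val κ X r g E junk γ hγκ α h x) := by
              have hgw := congrFun (hg γ hs) (val κ X r g E junk γ hγκ α h x)
              simp only [Function.comp_apply, id_eq] at hgw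
              rw [hgw]
          _ = r ξ α hξα (lt_of_le_of_lt hαβ hβ) x := IH2 ξ α hξα h x
      · rw [dif_neg h]
        exact r_cst κ X r _ hξα _ x
    · intro α η hαη hηβ x
      by_cases hη : η ≤ γ
      · have hαγ : α ≤ γ := hαη.trans hη
        rw [val_succ (α := η), dif_pos hη, val_succ (α := α), dif_pos hαγ]
        exact congrArg (fun z => cst κ X (Ordinal.add_one_eq_succ γ) (g γ hs z))
          (IH3 α η hαη hη x)
      · obtain rfl : η = Order.succ γ := (Order.le_succ_iff_eq_or_le.mp hηβ).resolve_right hη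
        rw [val_self κ X r g E junk _ hβ hηβ]; rfl
  · -- limit case
    have hthread : ∀ (α : Ordinal.{0}) (hαδ : α ≤ β)
        (x : X α (lt_of_le_of_lt hαδ hβ))
        (ξ η : {o : Ordinal.{0} // o < β}) (hle : ξ.1 ≤ η.1),
        r ξ.1 η.1 hle (η.2.trans hβ)
          (if h : α ≤ η.1 then val κ X r g E junk η.1 (η.2.trans hβ) α h x
            else r η.1 α (le_of_not_ge h) (lt_of_le_of_lt hαδ hβ) x)
        = (if h : α ≤ ξ.1 then val κ X r g E junk ξ.1 (ξ.2.trans hβ) α h x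
            else r ξ.1 α (le_of_not_ge h) (lt_of_le_of_lt hαδ hβ) x) := by
      intro α hαδ x ξ η hle
      obtain ⟨IHη1, IHη2, IHη3⟩ := IH η.1 η.2 (η.2.trans hβ)
      by_cases h2 : α ≤ ξ.1
      · rw [dif_pos h2, dif_pos (h2.trans hle)]
        rw [← IHη3 α ξ.1 h2 hle x]
        rw [IHη2 ξ.1 ξ.1 le_rfl hle (val κ X r g E junk ξ.1 (lt_of_le_of_lt hle (η.2.trans hβ)) α h2 x)]
        rw [hrid ξ.1 (lt_of_le_of_lt hle (η.2.trans hβ))]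
        rfl
      · by_cases h3 : α ≤ η.1
        · rw [dif_neg h2, dif_pos h3]
          exact IHη2 ξ.1 α (le_of_not_ge h2) h3 x
        · rw [dif_neg h2, dif_neg h3]
          exact congrFun (hrcomp ξ.1 η.1 α hle (le_of_not_ge h3) (lt_of_le_of_lt hαδ hβ)) x
    refine ⟨?_, ?_, ?_⟩
    · intro α hαβ
      by_cases hne : α = β
      · subst hne
        rw [val_self κ X r g E junk α hβ hαβ]; exact continuous_id
      · have hfun : val κ X r g E junk β hβ α hαβ = fun x =>
            E β hβ hlim ⟨fun ξ =>
              if h : α ≤ ξ.1 then val κ X r g E junk ξ.1 (ξ.2.trans hβ) α h x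
              else r ξ.1 α (le_of_not_ge h) (lt_of_le_of_lt hαβ hβ) x,
              hthread α hαβ x⟩ := by
          funext x
          simp only [val_limit κ X r g E junk β hlim hβ, dif_neg hne]
          exact dif_pos (hthread α hαβ x)
        rw [hfun]
        refine (hEcont β hβ hlim).comp (Continuous.subtype_mk (continuous_pi fun ξ => ?_) _)
        by_cases h : α ≤ ξ.1
        · simp only [dif_pos h]
          exact ((IH ξ.1 ξ.2 (ξ.2.trans hβ)).1 α h)
        · simp only [dif_neg h]
          exact hrcont ξ.1 α (le_of_not_ge h) (lt_of_le_of_lt hαβ hβ)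
    · intro ξ α hξα hαβ x
      by_cases hne : α = β
      · subst hne
        rw [val_self κ X r g E junk α hβ hαβ]; rfl
      · have hαlt : α < β := hαβ.lt_of_ne hne
        have hξδ : ξ < β := lt_of_le_of_lt hξα hαlt
        simp only [val_limit κ X r g E junk β hlim hβ, dif_neg hne]
        rw [dif_pos (hthread α hαβ x)]
        rw [hE β hβ hlim ⟨_, hthread α hαβ x⟩ ⟨ξ, hξδ⟩]
        show (if h : α ≤ ξ then val κ X r g E junk ξ (hξδ.trans hβ) α h x
              else r ξ α (le_of_not_ge h) (lt_of_le_of_lt hαβ hβ) x)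
            = r ξ α hξα (lt_of_le_of_lt hαβ hβ) x
        by_cases h : α ≤ ξ
        · obtain rfl : ξ = α := le_antisymm hξα h
          rw [dif_pos h, val_self κ X r g E junk ξ (hξδ.trans hβ) h, hrid ξ]
        · rw [dif_neg h]
    · intro α η hαη hηβ x
      by_cases hη : η = β
      · subst hη
        rw [val_self κ X r g E junk η hβ hηβ]; rfl
      · have hηδ : η < β := hηβ.lt_of_ne hη
        have hαδ : α < β := lt_of_le_of_lt hαη hηδ
        have hne : ¬ α = β := hαδ.ne
        obtain ⟨IHη1, IHη2, IHη3⟩ := IH η hηδ (lt_of_le_of_lt hηβ hβ)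
        simp only [val_limit κ X r g E junk β hlim hβ, dif_neg hη, dif_neg hne]
        rw [dif_pos (hthread η hηβ (val κ X r g E junk η (lt_of_le_of_lt hηβ hβ) α hαη x)),
          dif_pos (hthread α (hαη.trans hηβ) x)]
        refine congrArg (E β hβ hlim) (Subtype.ext (funext fun ξ => ?_))
        show (if h : η ≤ ξ.1 then val κ X r g E junk ξ.1 (ξ.2.trans hβ) η h
                  (val κ X r g E junk η (lt_of_le_of_lt hηβ hβ) α hαη x)
              else r ξ.1 η (le_of_not_ge h) (lt_of_le_of_lt hηβ hβ)
                  (val κ X r g E junk η (lt_of_le_of_lt hηβ hβ) α hαη x))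
            = (if h : α ≤ ξ.1 then val κ X r g E junk ξ.1 (ξ.2.trans hβ) α h x
              else r ξ.1 α (le_of_not_ge h) (lt_of_le_of_lt (hαη.trans hηβ) hβ) x)
        by_cases h1 : η ≤ ξ.1
        · rw [dif_pos h1, dif_pos (hαη.trans h1)]
          exact (IH ξ.1 ξ.2 (ξ.2.trans hβ)).2.2 α η hαη h1 x
        · by_cases h2 : α ≤ ξ.1
          · rw [dif_neg h1, dif_pos h2]
            rw [← IHη3 α ξ.1 h2 (le_of_not_ge h1) x]
            rw [IHη2 ξ.1 ξ.1 le_rfl (le_of_not_ge h1)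
              (val κ X r g E junk ξ.1 (lt_of_le_of_lt (le_of_not_ge h1) (lt_of_le_of_lt hηβ hβ)) α h2 x)]
            rw [hrid ξ.1]
            rfl
          · rw [dif_neg h1, dif_neg h2]
            exact IHη2 ξ.1 α (le_of_not_ge h2) hαη x

end ContRetrAux

/-- Lemma 3.2 of Kubiś–Michalewski: a continuous inverse sequence of
compact Hausdorff spaces indexed by an ordinal `κ`, with continuous surjective bonding
maps, in which every bonding map at a successor step `r^{α+1}_α` is a retraction
(admits a continuous right inverse), has a right inverse. Continuity of the sequence
is expressed by: for every limit ordinal `δ < κ`, the diagonal map is a homeomorphism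
from `X δ` onto the inverse limit of the sequence below `δ`. -/
theorem continuous_retractive_sequence_has_right_inverse
    (κ : Ordinal.{0})
    (X : ∀ α : Ordinal.{0}, α < κ → Type u)
    [inst : ∀ α h, TopologicalSpace (X α h)]
    [∀ α h, CompactSpace (X α h)] [∀ α h, T2Space (X α h)]
    (r : ∀ (α β : Ordinal.{0}) (hαβ : α ≤ β) (hβ : β < κ), X β hβ → X α (lt_of_le_of_lt hαβ hβ))
    (hrcont : ∀ α β hαβ hβ, Continuous (r α β hαβ hβ))
    (hrsurj : ∀ α β hαβ hβ, Function.Surjective (r α β hαβ hβ))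
    (hrid : ∀ α (hα : α < κ), r α α le_rfl hα = id)
    (hrcomp : ∀ (α β γ : Ordinal.{0}) (hαβ : α ≤ β) (hβγ : β ≤ γ) (hγ : γ < κ),
      r α β hαβ (lt_of_le_of_lt hβγ hγ) ∘ r β γ hβγ hγ = r α γ (hαβ.trans hβγ) hγ)
    -- continuity of the sequence at limit stages:
    (hcontinuous : ∀ (δ : Ordinal.{0}) (hδ : δ < κ), Order.IsSuccLimit δ →
      ∃ e : X δ hδ ≃ₜ {g : ∀ ξ : {o : Ordinal.{0} // o < δ}, X ξ.1 (ξ.2.trans hδ) //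
          ∀ (ξ η : {o : Ordinal.{0} // o < δ}) (hle : ξ.1 ≤ η.1),
            r ξ.1 η.1 hle (η.2.trans hδ) (g η) = g ξ},
        ∀ (x : X δ hδ) (ξ : {o : Ordinal.{0} // o < δ}),
          (e x).1 ξ = r ξ.1 δ ξ.2.le hδ x)
    -- every bonding map at a successor step is a retraction:
    (hretr : ∀ (α : Ordinal.{0}) (hs : α + 1 < κ),
      ∃ g : X α (lt_of_le_of_lt ((le_self_add : α ≤ α + 1)) hs) → X (α + 1) hs,
        Continuous g ∧ r α (α + 1) ((le_self_add : α ≤ α + 1)) hs ∘ g = id) :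
    ∃ i : ∀ (α β : Ordinal.{0}) (hαβ : α ≤ β) (hβ : β < κ),
        X α (lt_of_le_of_lt hαβ hβ) → X β hβ,
      (∀ α β hαβ hβ, Continuous (i α β hαβ hβ)) ∧
      (∀ α β hαβ hβ, r α β hαβ hβ ∘ i α β hαβ hβ = id) ∧
      (∀ α (hα : α < κ), i α α le_rfl hα = id) ∧
      (∀ (α β γ : Ordinal.{0}) (hαβ : α ≤ β) (hβγ : β ≤ γ) (hγ : γ < κ),
        i β γ hβγ hγ ∘ i α β hαβ (lt_of_le_of_lt hβγ hγ) = i α γ (hαβ.trans hβγ) hγ) := by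
  
  classical
  set g : ∀ (α : Ordinal.{0}) (hs : α + 1 < κ),
      X α (lt_of_le_of_lt ((le_self_add : α ≤ α + 1)) hs) → X (α + 1) hs :=
    fun α hs => (hretr α hs).choose with hgdef
  have hgcont : ∀ α hs, Continuous (g α hs) := fun α hs => (hretr α hs).choose_spec.1
  have hg : ∀ α hs, r α (α+1) ((le_self_add : α ≤ α + 1)) hs ∘ g α hs = id :=
    fun α hs => (hretr α hs).choose_spec.2
  set E : ∀ (δ : Ordinal.{0}) (hδ : δ < κ), Order.IsSuccLimit δ →
      {t : ∀ ξ : {o : Ordinal.{0} // o < δ}, X ξ.1 (ξ.2.trans hδ) //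
         ∀ (ξ η : {o : Ordinal.{0} // o < δ}) (hle : ξ.1 ≤ η.1),
           r ξ.1 η.1 hle (η.2.trans hδ) (t η) = t ξ} → X δ hδ :=
    fun δ hδ hlim => (hcontinuous δ hδ hlim).choose.symm with hEdef
  have hEcont : ∀ δ hδ hlim, Continuous (E δ hδ hlim) :=
    fun δ hδ hlim => (hcontinuous δ hδ hlim).choose.symm.continuous
  have hE : ∀ δ hδ hlim s (ξ : {o : Ordinal.{0} // o < δ}),
      r ξ.1 δ ξ.2.le hδ (E δ hδ hlim s) = s.1 ξ := by
    intro δ hδ hlim s ξ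
    have h1 := (hcontinuous δ hδ hlim).choose_spec ((hcontinuous δ hδ hlim).choose.symm s) ξ
    have h2 : (hcontinuous δ hδ hlim).choose ((hcontinuous δ hδ hlim).choose.symm s) = s :=
      (hcontinuous δ hδ hlim).choose.apply_symm_apply s
    rw [h2] at h1
    exact h1.symm
  set junk : ∀ (α β : Ordinal.{0}) (hαβ : α ≤ β) (hβ : β < κ),
      X α (lt_of_le_of_lt hαβ hβ) → X β hβ :=
    fun α β hαβ hβ x => (hrsurj α β hαβ hβ x).choose with hjdef
  refine ⟨fun α β hαβ hβ => ContRetrAux.val κ X r g E junk β hβ α hαβ, ?_, ?_, ?_, ?_⟩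
  · intro α β hαβ hβ
    exact (ContRetrAux.val_spec κ X r g E junk hrcont hrid hrcomp hgcont hg hEcont hE β hβ).1 α hαβ
  · intro α β hαβ hβ
    funext x
    have h := (ContRetrAux.val_spec κ X r g E junk hrcont hrid hrcomp hgcont hg hEcont hE β hβ).2.1
      α α le_rfl hαβ x
    rw [hrid α (lt_of_le_of_lt hαβ hβ)] at h
    exact h
  · intro α hα
    exact ContRetrAux.val_self κ X r g E junk α hα le_rfl
  · intro α β γ hαβ hβγ hγ
    funext x
    exact (ContRetrAux.val_spec κ X r g E junk hrcont hrid hrcomp hgcont hg hEcont hE γ hγ).2.2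
      α β hαβ hβγ x
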